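/- arXiv:1910.04019 — 2 statements merged into one kernel-verified Lean document; each statement's English description precedes it below -/
import Mathlib

section
/- Let (G,σ) be a magnetic graph with signature values in S¹_ℓ. For every function f : V → ℂ and every vertex (x,ξ) ∈ V × S¹_ℓ of the lift Ĝ, the Laplacian of the lift embedding satisfies (Δ̂ f̂)(x,ξ) = ξ·(Δ^σ f)(x). -/
open Finset ComplexConjugate
open scoped Classical

namespace Mag

variable {V : Type*}

/-- The degree of a vertex: total weight of incident edges. -/
noncomputable def deg [Fintype V] (p : V → V → ℝ) (x : V) : ℝ := ∑ y, p x y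

/-- Adjacency: positive edge weight. -/
def Adj (p : V → V → ℝ) (x y : V) : Prop := 0 < p x y

/-- Axioms of a weighted graph: symmetric nonnegative weights, no loops,
positive degrees. -/
structure IsWeightedGraph [Fintype V] (p : V → V → ℝ) : Prop where
  symm : ∀ x y, p x y = p y x
  nonneg : ∀ x y, 0 ≤ p x y
  loopless : ∀ x, p x x = 0
  deg_pos : ∀ x, 0 < deg p x

/-- Connectivity: any two vertices are joined by a path of successively
adjacent vertices. -/
def Connected (p : V → V → ℝ) : Prop :=
  ∀ x y : V, ∃ L : List V,
    List.Chain (Adj p) x L ∧ (x :: L).getLast (List.cons_ne_nil x L) = y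

/-- The graph distance from `x` to `y` is at most `n`. -/
def distLE (p : V → V → ℝ) (x y : V) (n : ℕ) : Prop :=
  ∃ L : List V, L.length ≤ n ∧ List.Chain (Adj p) x L ∧
    (x :: L).getLast (List.cons_ne_nil x L) = y

/-- `D` is the diameter: every pair of vertices is at distance at most `D`,
and some pair is at distance at least `D`. -/
def IsDiameter (p : V → V → ℝ) (D : ℕ) : Prop :=
  (∀ x y, distLE p x y D) ∧ ∃ x y, ∀ n, distLE p x y n → D ≤ n

/-- The (normalized) graph Laplace operator on complex-valued functions. -/
noncomputable def lap [Fintype V] (p : V → V → ℝ) (f : V → ℂ) (x : V) : ℂ :=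
  (deg p x : ℂ)⁻¹ * ∑ y, (p x y : ℂ) * (f y - f x)

/-- The graph Laplace operator acting on real-valued functions. -/
noncomputable def lapR [Fintype V] (p : V → V → ℝ) (u : V → ℝ) (x : V) : ℝ :=
  (deg p x)⁻¹ * ∑ y, p x y * (u y - u x)

/-- The energy `|∇f|²(x)` of a function at a vertex. -/
noncomputable def energy [Fintype V] (p : V → V → ℝ) (f : V → ℂ) (x : V) : ℝ :=
  (deg p x)⁻¹ * ∑ y, p x y * ‖f y - f x‖ ^ 2

/-- The first curvature operator `Γ`. -/
noncomputable def gamma [Fintype V] (p : V → V → ℝ) (f g : V → ℂ) (x : V) : ℂ :=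
  (1 / 2) * (lap p (fun v => f v * conj (g v)) x - f x * conj (lap p g x)
    - lap p f x * conj (g x))

/-- The iterated (Ricci) curvature operator `Γ₂`. -/
noncomputable def gamma2 [Fintype V] (p : V → V → ℝ) (f g : V → ℂ) (x : V) : ℂ :=
  (1 / 2) * (lap p (gamma p f g) x - gamma p f (lap p g) x - gamma p (lap p f) g x)

/-- `f` satisfies the curvature-dimension inequality `CD(n,κ)`:
`Γ₂(f,f)(x) ≥ (1/n)|Δf(x)|² + κ·Γ(f,f)(x)` at every vertex. -/
def SatCD [Fintype V] (p : V → V → ℝ) (n κ : ℝ) (f : V → ℂ) : Prop :=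
  ∀ x : V, (1 / n) * ‖lap p f x‖ ^ 2 + κ * (gamma p f f x).re ≤ (gamma2 p f f x).re

/-- The magnetic Laplace operator. -/
noncomputable def magLap [Fintype V] (p : V → V → ℝ) (σ : V → V → ℂ)
    (f : V → ℂ) (x : V) : ℂ :=
  (deg p x : ℂ)⁻¹ * ∑ y, (p x y : ℂ) * (σ x y * f y - f x)

/-- The magnetic energy `|∇^σ f|²(x)`. -/
noncomputable def magEnergy [Fintype V] (p : V → V → ℝ) (σ : V → V → ℂ)
    (f : V → ℂ) (x : V) : ℝ :=
  (deg p x)⁻¹ * ∑ y, p x y * ‖σ x y * f y - f x‖ ^ 2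

/-- The first magnetic curvature operator `Γ^σ`. -/
noncomputable def magGamma [Fintype V] (p : V → V → ℝ) (σ : V → V → ℂ)
    (f g : V → ℂ) (x : V) : ℂ :=
  (1 / 2) * (magLap p σ (fun v => f v * conj (g v)) x - f x * conj (magLap p σ g x)
    - magLap p σ f x * conj (g x))

/-- The magnetic Ricci curvature operator `Γ₂^σ`. -/
noncomputable def magGamma2 [Fintype V] (p : V → V → ℝ) (σ : V → V → ℂ)
    (f g : V → ℂ) (x : V) : ℂ :=
  (1 / 2) * (lap p (magGamma p σ f g) x - magGamma p σ f (magLap p σ g) x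
    - magGamma p σ (magLap p σ f) g x)

/-- `f` satisfies the magnetic curvature-dimension inequality `CD^σ(n,κ)`. -/
def SatCDSigma [Fintype V] (p : V → V → ℝ) (σ : V → V → ℂ) (n κ : ℝ)
    (f : V → ℂ) : Prop :=
  ∀ x : V, (1 / n) * ‖magLap p σ f x‖ ^ 2 + κ * (magGamma p σ f f x).re
    ≤ (magGamma2 p σ f f x).re

/-- A signature with values in the group `S¹_ℓ` of `ℓ`-th roots of unity:
`σ_{xy}^ℓ = 1` and `σ_{yx} = σ_{xy}⁻¹` on oriented edges. -/
structure IsSignature (p : V → V → ℝ) (σ : V → V → ℂ) (ℓ : ℕ) : Prop where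
  mem : ∀ x y, Adj p x y → σ x y ^ ℓ = 1
  inv : ∀ x y, Adj p x y → σ x y * σ y x = 1

/-- The signature is entire: its values (on oriented edges) generate all of
`S¹_ℓ`, i.e. every `ℓ`-th root of unity is a product of signature values. -/
def Entire (p : V → V → ℝ) (σ : V → V → ℂ) (ℓ : ℕ) : Prop :=
  ∀ z : ℂ, z ^ ℓ = 1 →
    ∃ L : List (V × V), (∀ e ∈ L, Adj p e.1 e.2) ∧ (L.map fun e => σ e.1 e.2).prod = z

/-- The product of the signature values along the consecutive edges of a
list of vertices. -/
noncomputable def sigProd (σ : V → V → ℂ) (L : List V) : ℂ :=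
  ((L.zip L.tail).map fun e => σ e.1 e.2).prod

/-- A directed cycle: a closed walk along adjacent vertices. -/
def IsCycle (p : V → V → ℝ) (L : List V) : Prop :=
  2 ≤ L.length ∧ L.Chain' (Adj p) ∧ L.head? = L.getLast?

/-- A magnetic graph is balanced if the signature product along every directed
cycle equals `1`. -/
def Balanced (p : V → V → ℝ) (σ : V → V → ℂ) : Prop :=
  ∀ L : List V, IsCycle p L → sigProd σ L = 1

/-- A directed cycle whose signature product generates `S¹_ℓ`. -/
def IsGenCycle (p : V → V → ℝ) (σ : V → V → ℂ) (ℓ : ℕ) (L : List V) : Prop :=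
  IsCycle p L ∧ ∀ z : ℂ, z ^ ℓ = 1 → ∃ m : ℕ, sigProd σ L ^ m = z

/-- `g` is the magnetic girth: the length of a shortest directed cycle whose
signature product generates `S¹_ℓ`.  (A list of `g+1` vertices, with equal
endpoints, traverses `g` edges.) -/
def IsMagGirth (p : V → V → ℝ) (σ : V → V → ℂ) (ℓ : ℕ) (g : ℕ) : Prop :=
  (∃ L, IsGenCycle p σ ℓ L ∧ L.length = g + 1) ∧
  ∀ L, IsGenCycle p σ ℓ L → g + 1 ≤ L.length

/-- The `ℓ`-th roots of unity in `ℂ` form a finite type. -/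
noncomputable instance rootsFintype (ℓ : ℕ) [NeZero ℓ] :
    Fintype {z : ℂ // z ^ ℓ = 1} := by
  apply Fintype.ofFinset ((Polynomial.nthRoots ℓ (1 : ℂ)).toFinset)
  intro z
  rw [Multiset.mem_toFinset, Polynomial.mem_nthRoots (Nat.pos_of_ne_zero (NeZero.ne ℓ))]
  exact Iff.rfl

/-- The weight function of the lift (covering) graph `Ĝ` on `V × S¹_ℓ`. -/
noncomputable def liftP (p : V → V → ℝ) (σ : V → V → ℂ) (ℓ : ℕ) :
    V × {z : ℂ // z ^ ℓ = 1} → V × {z : ℂ // z ^ ℓ = 1} → ℝ :=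
  fun a b =>
    if Adj p a.1 b.1 ∧ (b.2 : ℂ) = (a.2 : ℂ) * σ a.1 b.1 then p a.1 b.1 else 0

/-- The lift embedding `f̂(x,ξ) = ξ·f(x)`. -/
noncomputable def liftEmb (ℓ : ℕ) (f : V → ℂ) : V × {z : ℂ // z ^ ℓ = 1} → ℂ :=
  fun a => (a.2 : ℂ) * f a.1

/-- A simple graph: all edge weights are `0` or `1`. -/
def Simple (p : V → V → ℝ) : Prop := ∀ x y, p x y = 0 ∨ p x y = 1

/-- `d` is the maximum degree of the graph. -/
def IsMaxDegree [Fintype V] (p : V → V → ℝ) (d : ℝ) : Prop :=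
  (∀ x, deg p x ≤ d) ∧ ∃ x, deg p x = d

/-- `l` is the least eigenvalue of `-Δ^σ`. -/
def IsLeastEigenvalue [Fintype V] (p : V → V → ℝ) (σ : V → V → ℂ) (l : ℝ) : Prop :=
  (∃ f : V → ℂ, f ≠ 0 ∧ ∀ x, -magLap p σ f x = (l : ℂ) * f x) ∧
  ∀ (μ : ℝ) (f : V → ℂ), f ≠ 0 → (∀ x, -magLap p σ f x = (μ : ℂ) * f x) → l ≤ μ

/-- The set of frustration values of a vertex subset `V₁`: sums
`∑_{edges {x,y} ⊆ V₁} p(x,y)|τ(x) − σ_{xy}τ(y)|` over switching functions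
`τ : V₁ → S¹_ℓ`.  (Each undirected edge is counted once, via the factor `1/2`.) -/
def frustrationSet [Fintype V] (p : V → V → ℝ) (σ : V → V → ℂ) (ℓ : ℕ)
    (V₁ : Finset V) : Set ℝ :=
  { r | ∃ τ : V → ℂ, (∀ x ∈ V₁, τ x ^ ℓ = 1) ∧
      r = (1 / 2) * ∑ x ∈ V₁, ∑ y ∈ V₁, p x y * ‖τ x - σ x y * τ y‖ }

/-- The set of Cheeger ratios `(ι^σ(V₁) + |E(V₁,V₁ᶜ)|)/vol(V₁)` over nonempty
vertex subsets `V₁`, where `ι^σ(V₁)` is the frustration index of `V₁`. -/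
def cheegerSet [Fintype V] (p : V → V → ℝ) (σ : V → V → ℂ) (ℓ : ℕ) : Set ℝ :=
  { r | ∃ V₁ : Finset V, V₁.Nonempty ∧ ∃ ι : ℝ, IsLeast (frustrationSet p σ ℓ V₁) ι ∧
      r = (ι + ∑ x ∈ V₁, ∑ y ∈ V₁ᶜ, p x y) / ∑ x ∈ V₁, deg p x }

/-- `h` is the magnetic Cheeger number `h₁^σ`. -/
def IsCheeger [Fintype V] (p : V → V → ℝ) (σ : V → V → ℂ) (ℓ : ℕ) (h : ℝ) : Prop :=
  IsLeast (cheegerSet p σ ℓ) h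

section Lift

variable {V : Type*} {p : V → V → ℝ} {σ : V → V → ℂ} {ℓ : ℕ}

theorem liftP_eq_zero_of_not_adj {x y : V} (h : ¬ Adj p x y)
    (ξ η : {z : ℂ // z ^ ℓ = 1}) : liftP p σ ℓ (x, ξ) (y, η) = 0 :=
  if_neg fun hxy => h hxy.1

/-- Over a fixed neighbour `y` of `x`, exactly one sheet of the lift is joined to `(x, ξ)`,
namely the one over `ξ · σ_{xy}`. -/
theorem sum_liftP_smul [NeZero ℓ] {M : Type*} [AddCommMonoid M] [Module ℝ M]
    (hσ : IsSignature p σ ℓ) {x y : V} (hpxy : 0 ≤ p x y) (ξ : {z : ℂ // z ^ ℓ = 1})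
    (g : ℂ → M) :
    ∑ η : {z : ℂ // z ^ ℓ = 1}, liftP p σ ℓ (x, ξ) (y, η) • g η = p x y • g (ξ * σ x y) := by
  by_cases hxy : Adj p x y
  · have hroot : ((ξ : ℂ) * σ x y) ^ ℓ = 1 := by rw [mul_pow, ξ.2, hσ.mem x y hxy, one_mul]
    rw [Fintype.sum_eq_single ⟨_, hroot⟩]
    · simp only [liftP, hxy, true_and, if_true]
    · intro η hne
      rw [liftP, if_neg fun h => hne (Subtype.ext h.2), zero_smul]
  · simp only [liftP_eq_zero_of_not_adj hxy, zero_smul, Finset.sum_const_zero,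
      le_antisymm (not_lt.mp hxy) hpxy]

theorem deg_liftP [Fintype V] [NeZero ℓ] (hσ : IsSignature p σ ℓ) {x : V} (hp : ∀ y, 0 ≤ p x y)
    (ξ : {z : ℂ // z ^ ℓ = 1}) : deg (liftP p σ ℓ) (x, ξ) = deg p x := by
  rw [deg, deg, Fintype.sum_prod_type]
  refine Finset.sum_congr rfl fun y _ => ?_
  simpa only [smul_eq_mul, mul_one] using sum_liftP_smul (M := ℝ) hσ (hp y) ξ fun _ => 1

end Lift

theorem lift_lap_general {V : Type*} [Fintype V]
    (p : V → V → ℝ) (σ : V → V → ℂ) (ℓ : ℕ) [NeZero ℓ]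
    (hG : IsWeightedGraph p) (hσ : IsSignature p σ ℓ)
    (f : V → ℂ) (x : V) (ξ : {z : ℂ // z ^ ℓ = 1}) :
    lap (liftP p σ ℓ) (liftEmb ℓ f) (x, ξ) = (ξ : ℂ) * magLap p σ f x := by
  have hfiber : ∀ y, ∑ η : {z : ℂ // z ^ ℓ = 1},
      (liftP p σ ℓ (x, ξ) (y, η) : ℂ) * (liftEmb ℓ f (y, η) - liftEmb ℓ f (x, ξ))
      = (ξ : ℂ) * ((p x y : ℂ) * (σ x y * f y - f x)) := fun y => by
    simp only [liftEmb, ← Complex.real_smul]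
    rw [sum_liftP_smul hσ (hG.nonneg x y) ξ fun z => z * f y - ξ * f x]
    simp only [Complex.real_smul]
    ring
  rw [lap, magLap, deg_liftP hσ (hG.nonneg x) ξ, Fintype.sum_prod_type]
  simp only [hfiber, ← Finset.mul_sum]
  ring

/-- The Laplacian of the lift embedding satisfies
`(Δ̂ f̂)(x,ξ) = ξ·(Δ^σ f)(x)`. -/
theorem lift_lap {V : Type*} [Fintype V] [Nonempty V]
    (p : V → V → ℝ) (σ : V → V → ℂ) (ℓ : ℕ) [NeZero ℓ]
    (hG : IsWeightedGraph p) (hσ : IsSignature p σ ℓ)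
    (f : V → ℂ) (x : V) (ξ : {z : ℂ // z ^ ℓ = 1}) :
    lap (liftP p σ ℓ) (liftEmb ℓ f) (x, ξ) = (ξ : ℂ) * magLap p σ f x :=
  lift_lap_general p σ ℓ hG hσ f x ξ

end Mag
end

section
/- (Harnack inequality.) Let G be a finite connected weighted graph, n ∈ (1,∞), κ ∈ ℝ, and suppose f : V → ℂ is a nonzero eigenfunction of −Δ with eigenvalue λ > 0 which satisfies CD(n,κ). Then at each vertex x ∈ V: |∇f|²(x) ≤ ((8 − 2/n)·λ − 4κ) · max_{z ∈ V} |f(z)|². -/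
/-!
Write `u = |f|²` and `E = |∇f|²`. For an eigenfunction, `Δu = E - 2λu` and `Γ₂(f,f) = ΔE/4 + λE/2`,
so `CD(n,κ)` becomes the Bochner inequality `ΔE ≥ 4λ²u/n + 2(κ - λ)E`. Applied at a maximum of `E`
it gives `κ ≤ λ`; applied at a maximum `x₀` of `E + (4λ - 2κ)u`, where the Laplacian is
nonpositive, it gives `E(x₀) ≤ ((4 - 2/n)λ - 2κ)u(x₀)`. Hence everywhere
`E ≤ E + (4λ - 2κ)u ≤ ((8 - 2/n)λ - 4κ)u(x₀)`, the coefficients being nonnegative as `κ ≤ λ`.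
-/

open Finset ComplexConjugate
open scoped Classical

namespace Mag

variable {V : Type*}

section Laplacian

variable [Fintype V] (p : V → V → ℝ)

lemma lap_ofReal (w : V → ℝ) (x : V) :
    lap p (fun v => (w v : ℂ)) x = lapR p w x := by
  unfold lap lapR
  push_cast
  ring

lemma lap_const_mul (c : ℂ) (f : V → ℂ) (x : V) :
    lap p (fun v => c * f v) x = c * lap p f x := by
  simp only [lap, Finset.mul_sum]
  exact Finset.sum_congr rfl fun y _ => by ring

lemma lapR_add (u w : V → ℝ) (x : V) :
    lapR p (fun v => u v + w v) x = lapR p u x + lapR p w x := by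
  simp only [lapR, ← mul_add, ← Finset.sum_add_distrib]
  exact congrArg _ (Finset.sum_congr rfl fun y _ => by ring)

lemma lapR_const_mul (c : ℝ) (u : V → ℝ) (x : V) :
    lapR p (fun v => c * u v) x = c * lapR p u x := by
  simp only [lapR, Finset.mul_sum]
  exact Finset.sum_congr rfl fun y _ => by ring

lemma gamma_self (f : V → ℂ) (x : V) :
    gamma p f f x = ((energy p f x / 2 : ℝ) : ℂ) := by
  unfold gamma lap energy
  rw [map_mul, map_sum]
  push_cast
  rw [Finset.mul_sum, Finset.mul_sum, Finset.mul_sum, Finset.mul_sum, Finset.sum_mul,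
    ← Finset.sum_sub_distrib, ← Finset.sum_sub_distrib, Finset.mul_sum, Finset.mul_sum,
    Finset.sum_div]
  refine Finset.sum_congr rfl fun y _ => ?_
  simp only [map_mul, map_sub, map_inv₀, Complex.conj_ofReal]
  have hz := Complex.mul_conj' (f y - f x)
  rw [map_sub] at hz
  linear_combination (deg p x : ℂ)⁻¹ * (p x y : ℂ) / 2 * hz

lemma gamma_const_mul_left (c : ℂ) (f g : V → ℂ) (x : V) :
    gamma p (fun v => c * f v) g x = c * gamma p f g x := by
  unfold gamma
  have hprod : (fun v => c * f v * conj (g v)) = fun v => c * (f v * conj (g v)) :=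
    funext fun v => by ring
  rw [hprod, lap_const_mul, lap_const_mul]
  ring

lemma gamma_const_mul_right (c : ℂ) (f g : V → ℂ) (x : V) :
    gamma p f (fun v => c * g v) x = conj c * gamma p f g x := by
  unfold gamma
  have hprod : (fun v => f v * conj (c * g v)) = fun v => conj c * (f v * conj (g v)) :=
    funext fun v => by rw [map_mul]; ring
  rw [hprod, lap_const_mul, lap_const_mul, map_mul, map_mul]
  ring

variable {p}

lemma lapR_nonpos_of_forall_le (hp : ∀ x y, 0 ≤ p x y) {u : V → ℝ} {x₀ : V}
    (hmax : ∀ y, u y ≤ u x₀) : lapR p u x₀ ≤ 0 :=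
  mul_nonpos_of_nonneg_of_nonpos (inv_nonneg.2 (Finset.sum_nonneg fun y _ => hp x₀ y))
    (Finset.sum_nonpos fun y _ =>
      mul_nonpos_of_nonneg_of_nonpos (hp x₀ y) (sub_nonpos.2 (hmax y)))

lemma energy_nonneg (hp : ∀ x y, 0 ≤ p x y) (f : V → ℂ) (x : V) : 0 ≤ energy p f x :=
  mul_nonneg (inv_nonneg.2 (Finset.sum_nonneg fun y _ => hp x y))
    (Finset.sum_nonneg fun y _ => mul_nonneg (hp x y) (by positivity))

lemma lap_eq_zero_of_energy_eq_zero (hp : ∀ x y, 0 ≤ p x y) {f : V → ℂ} {x : V}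
    (hE : energy p f x = 0) : lap p f x = 0 := by
  rcases mul_eq_zero.1 hE with hdeg | hsum
  · simp only [lap, ← Complex.ofReal_inv, hdeg, Complex.ofReal_zero, zero_mul]
  have hterm := (Finset.sum_eq_zero_iff_of_nonneg fun y _ =>
    mul_nonneg (hp x y) (sq_nonneg ‖f y - f x‖)).1 hsum
  refine mul_eq_zero_of_right _ (Finset.sum_eq_zero fun y hy => ?_)
  rcases mul_eq_zero.1 (hterm y hy) with hpxy | hdiff
  · simp [hpxy]
  · simp [norm_eq_zero.1 (pow_eq_zero_iff two_ne_zero |>.1 hdiff)]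

end Laplacian

section Eigenfunction

variable [Fintype V] {p : V → V → ℝ} {f : V → ℂ} {lam : ℝ}

lemma lap_eq_of_eigen (heig : ∀ x, -lap p f x = (lam : ℂ) * f x) :
    lap p f = fun v => -(lam : ℂ) * f v :=
  funext fun v => by linear_combination -(heig v)

lemma lapR_normSq_of_eigen (heig : ∀ x, -lap p f x = (lam : ℂ) * f x) (x : V) :
    lapR p (fun v => ‖f v‖ ^ 2) x = energy p f x - 2 * lam * ‖f x‖ ^ 2 := by
  have hlap : lap p f x = -(lam : ℂ) * f x := congrFun (lap_eq_of_eigen heig) x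
  have hgamma := gamma_self p f x
  unfold gamma at hgamma
  have hsq : (fun v => f v * conj (f v)) = fun v => ((‖f v‖ ^ 2 : ℝ) : ℂ) :=
    funext fun v => by push_cast; exact Complex.mul_conj' (f v)
  rw [hsq, hlap, lap_ofReal, map_mul, map_neg, Complex.conj_ofReal] at hgamma
  apply Complex.ofReal_injective
  push_cast at hgamma ⊢
  rw [← Complex.mul_conj' (f x)]
  linear_combination 2 * hgamma

lemma re_gamma2_of_eigen (heig : ∀ x, -lap p f x = (lam : ℂ) * f x) (x : V) :
    (gamma2 p f f x).re = lapR p (energy p f) x / 4 + lam * energy p f x / 2 := by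
  have hgamma : gamma p f f = fun v => ((energy p f v / 2 : ℝ) : ℂ) := funext (gamma_self p f)
  unfold gamma2
  rw [hgamma, lap_ofReal, lap_eq_of_eigen heig, gamma_const_mul_right, gamma_const_mul_left,
    gamma_self]
  have hhalf : (fun v => energy p f v / 2) = fun v => 2⁻¹ * energy p f v :=
    funext fun v => div_eq_inv_mul _ _
  rw [hhalf, lapR_const_mul, map_neg, Complex.conj_ofReal,
    ← Complex.ofReal_re (lapR p (energy p f) x / 4 + lam * energy p f x / 2)]
  congr 1
  push_cast
  ring

lemma lapR_energy_ge_of_satCD {n κ : ℝ} (heig : ∀ x, -lap p f x = (lam : ℂ) * f x)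
    (hcd : SatCD p n κ f) (x : V) :
    4 * lam ^ 2 / n * ‖f x‖ ^ 2 + 2 * (κ - lam) * energy p f x ≤ lapR p (energy p f) x := by
  have hcdx := hcd x
  rw [congrFun (lap_eq_of_eigen heig) x, gamma_self, Complex.ofReal_re,
    re_gamma2_of_eigen heig, norm_mul, norm_neg, Complex.norm_real, Real.norm_eq_abs, mul_pow,
    sq_abs] at hcdx
  linear_combination 4 * hcdx

lemma le_eigenvalue_of_satCD (hp : ∀ x y, 0 ≤ p x y) {n κ : ℝ} (hn : 0 ≤ n)
    (hlam : lam ≠ 0) (hf0 : f ≠ 0) (heig : ∀ x, -lap p f x = (lam : ℂ) * f x)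
    (hcd : SatCD p n κ f) : κ ≤ lam := by
  obtain ⟨v, -⟩ := Function.ne_iff.1 hf0
  have : Nonempty V := ⟨v⟩
  obtain ⟨x₁, hx₁⟩ := Finite.exists_max (energy p f)
  have hE₁ : 0 < energy p f x₁ := by
    refine (energy_nonneg hp f x₁).lt_of_ne fun hzero => hf0 (funext fun y => ?_)
    have hEy : energy p f y = 0 := le_antisymm (hzero ▸ hx₁ y) (energy_nonneg hp f y)
    have := heig y
    rw [lap_eq_zero_of_energy_eq_zero hp hEy, neg_zero, eq_comm, mul_eq_zero] at this
    exact this.resolve_left (Complex.ofReal_ne_zero.2 hlam)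
  have hbochner := lapR_energy_ge_of_satCD heig hcd x₁
  have hmax := lapR_nonpos_of_forall_le hp hx₁
  have hpos : 0 ≤ 4 * lam ^ 2 / n * ‖f x₁‖ ^ 2 := by positivity
  have hneg : (κ - lam) * energy p f x₁ ≤ 0 := by linarith
  exact sub_nonpos.1 (nonpos_of_mul_nonpos_left hneg hE₁)

lemma energy_le_at_max_of_satCD (hp : ∀ x y, 0 ≤ p x y) {n κ : ℝ} (hlam : 0 < lam)
    (heig : ∀ x, -lap p f x = (lam : ℂ) * f x) (hcd : SatCD p n κ f) {x₀ : V}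
    (hmax : ∀ y, energy p f y + (4 * lam - 2 * κ) * ‖f y‖ ^ 2
      ≤ energy p f x₀ + (4 * lam - 2 * κ) * ‖f x₀‖ ^ 2) :
    energy p f x₀ ≤ ((4 - 2 / n) * lam - 2 * κ) * ‖f x₀‖ ^ 2 := by
  have hlapF := lapR_nonpos_of_forall_le hp hmax
  rw [lapR_add, lapR_const_mul, lapR_normSq_of_eigen heig] at hlapF
  have hbochner := lapR_energy_ge_of_satCD heig hcd x₀
  have key : lam * energy p f x₀ ≤ lam * (((4 - 2 / n) * lam - 2 * κ) * ‖f x₀‖ ^ 2) := by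
    linear_combination (hlapF + hbochner) / 2
  exact le_of_mul_le_mul_left key hlam

end Eigenfunction

theorem harnack_general {V : Type*} [Fintype V]
    (p : V → V → ℝ) (hG : IsWeightedGraph p)
    (n κ : ℝ) (hn : 1 < n) (f : V → ℂ) (lam : ℝ) (hlam : 0 < lam)
    (hf0 : f ≠ 0) (heig : ∀ x, -lap p f x = (lam : ℂ) * f x)
    (hcd : SatCD p n κ f) (x : V) :
    energy p f x ≤ ((8 - 2 / n) * lam - 4 * κ) * ⨆ z : V, ‖f z‖ ^ 2 := by
  have hκ := le_eigenvalue_of_satCD hG.nonneg (by linarith) hlam.ne' hf0 heig hcd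
  have : Nonempty V := ⟨x⟩
  obtain ⟨x₀, hx₀⟩ :=
    Finite.exists_max fun v => energy p f v + (4 * lam - 2 * κ) * ‖f v‖ ^ 2
  have hE₀ := energy_le_at_max_of_satCD hG.nonneg hlam heig hcd hx₀
  have hsup : ‖f x₀‖ ^ 2 ≤ ⨆ z : V, ‖f z‖ ^ 2 :=
    le_ciSup (f := fun z => ‖f z‖ ^ 2) (Finite.bddAbove_range _) x₀
  have hn' : 2 / n * lam ≤ 2 * lam :=
    mul_le_mul_of_nonneg_right (div_le_self zero_le_two hn.le) hlam.le
  calc energy p f x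
      ≤ energy p f x + (4 * lam - 2 * κ) * ‖f x‖ ^ 2 :=
        le_add_of_nonneg_right (mul_nonneg (by linarith) (sq_nonneg _))
    _ ≤ energy p f x₀ + (4 * lam - 2 * κ) * ‖f x₀‖ ^ 2 := hx₀ x
    _ ≤ ((8 - 2 / n) * lam - 4 * κ) * ‖f x₀‖ ^ 2 := by linarith
    _ ≤ ((8 - 2 / n) * lam - 4 * κ) * ⨆ z : V, ‖f z‖ ^ 2 :=
        mul_le_mul_of_nonneg_left hsup (by linarith)

/-- Harnack inequality, Theorem 2.4.  For a harmonic
eigenfunction `f` of `−Δ` with eigenvalue `λ > 0` satisfying `CD(n,κ)`: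
`|∇f|²(x) ≤ ((8 − 2/n)λ − 4κ)·max_z |f(z)|²`. -/
theorem harnack {V : Type*} [Fintype V] [Nonempty V]
    (p : V → V → ℝ) (hG : IsWeightedGraph p) (hconn : Connected p)
    (n κ : ℝ) (hn : 1 < n) (f : V → ℂ) (lam : ℝ) (hlam : 0 < lam)
    (hf0 : f ≠ 0) (heig : ∀ x, -lap p f x = (lam : ℂ) * f x)
    (hcd : SatCD p n κ f) (x : V) :
    energy p f x ≤ ((8 - 2 / n) * lam - 4 * κ) * ⨆ z : V, ‖f z‖ ^ 2 :=
  harnack_general p hG n κ hn f lam hlam hf0 heig hcd x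

end Mag
end
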